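/- Let X = X₀ + Z with maxᵢ ‖Zᵢ‖₂ ≤ δ, and suppose Ĥ minimizes 𝒟(H, X) over all H ∈ ℝ^{r×d} satisfying dist(Xᵢ, conv(H)) ≤ δ for all i ≤ n, where 𝒟(H,X) = Σ_{ℓ=1}^r dist(H_ℓ, conv(X))². Assume dist(Xᵢ, conv(H₀)) ≤ δ for all i (so that H₀ is feasible). Then 𝒟(Ĥ, X₀)^{1/2} ≤ 𝒟(H₀, X₀)^{1/2} + 3δ√r. -/

import Mathlib

/-!
Moving every row of `X` by at most `δ` moves the convex hull of the rows by at most `δ` in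
Hausdorff distance, so each of the `r` distances `dist(H_ℓ, conv X)` changes by at most `δ`, and by
the triangle inequality in `ℝʳ` the square root of `𝒟(H, X)` changes by at most `δ√r`. Passing from
`X₀` to `X` for `Ĥ`, using the optimality of `Ĥ` against the feasible `H₀`, and passing back from
`X` to `X₀` for `H₀` gives the bound.
-/

open Metric Set

noncomputable section

def row {n d : ℕ} (M : Matrix (Fin n) (Fin d) ℝ) (i : Fin n) : EuclideanSpace ℝ (Fin d) :=
  WithLp.toLp 2 (fun j => M i j)

def convRows {n d : ℕ} (M : Matrix (Fin n) (Fin d) ℝ) : Set (EuclideanSpace ℝ (Fin d)) :=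
  convexHull ℝ (Set.range (row M))

def cvxDiv {r n d : ℕ} (A : Matrix (Fin r) (Fin d) ℝ) (B : Matrix (Fin n) (Fin d) ℝ) : ℝ :=
  ∑ i, (Metric.infDist (row A i) (convRows B)) ^ 2

section ConvexHull

variable {ι E : Type*} [SeminormedAddCommGroup E] [NormedSpace ℝ E] {f g : ι → E} {δ : ℝ}

theorem convexHull_range_subset_cthickening (h : ∀ i, dist (f i) (g i) ≤ δ) :
    convexHull ℝ (range f) ⊆ cthickening δ (convexHull ℝ (range g)) :=
  convexHull_min
    (range_subset_iff.2 fun i ↦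
      mem_cthickening_of_dist_le _ _ _ _ (subset_convexHull ℝ _ (mem_range_self i)) (h i))
    ((convex_convexHull ℝ _).cthickening δ)

theorem hausdorffEDist_convexHull_range_le (h : ∀ i, dist (f i) (g i) ≤ δ) :
    hausdorffEDist (convexHull ℝ (range f)) (convexHull ℝ (range g)) ≤ ENNReal.ofReal δ :=
  hausdorffEDist_le_of_infEDist
    (fun _ hx ↦ mem_cthickening_iff.1 (convexHull_range_subset_cthickening h hx))
    (fun _ hx ↦ mem_cthickening_iff.1 (convexHull_range_subset_cthickening
      (fun i ↦ (dist_comm (g i) (f i)).trans_le (h i)) hx))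

theorem infDist_convexHull_range_le (hδ : 0 ≤ δ) (h : ∀ i, dist (f i) (g i) ≤ δ) (x : E) :
    infDist x (convexHull ℝ (range g)) ≤ infDist x (convexHull ℝ (range f)) + δ := by
  have hH := hausdorffEDist_convexHull_range_le h
  calc infDist x (convexHull ℝ (range g))
      ≤ infDist x (convexHull ℝ (range f)) +
          hausdorffDist (convexHull ℝ (range f)) (convexHull ℝ (range g)) :=
        infDist_le_infDist_add_hausdorffDist (ne_top_of_le_ne_top ENNReal.ofReal_ne_top hH)
    _ ≤ infDist x (convexHull ℝ (range f)) + δ := by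
        gcongr
        exact ENNReal.toReal_le_of_le_ofReal hδ hH

end ConvexHull

theorem sqrt_sum_sq_le_sqrt_sum_sq_add {ι : Type*} [Fintype ι] {u v : ι → ℝ} {δ : ℝ}
    (hδ : 0 ≤ δ) (hv : ∀ i, 0 ≤ v i) (h : ∀ i, v i ≤ u i + δ) :
    √(∑ i, v i ^ 2) ≤ √(∑ i, u i ^ 2) + δ * √(Fintype.card ι) := by
  have norm_toLp (w : ι → ℝ) : ‖(WithLp.toLp 2 w : EuclideanSpace ℝ ι)‖ = √(∑ i, w i ^ 2) := by
    simp [EuclideanSpace.norm_eq]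
  let U : EuclideanSpace ℝ ι := WithLp.toLp 2 u
  let C : EuclideanSpace ℝ ι := WithLp.toLp 2 fun _ ↦ δ
  calc √(∑ i, v i ^ 2)
      ≤ √(∑ i, (u i + δ) ^ 2) :=
        Real.sqrt_le_sqrt (Finset.sum_le_sum fun i _ ↦ pow_le_pow_left₀ (hv i) (h i) 2)
    _ = ‖U + C‖ := by
        rw [← WithLp.toLp_add, norm_toLp]
        rfl
    _ ≤ ‖U‖ + ‖C‖ := norm_add_le U C
    _ = √(∑ i, u i ^ 2) + δ * √(Fintype.card ι) := by
        rw [norm_toLp, norm_toLp, Finset.sum_const, Finset.card_univ, nsmul_eq_mul,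
          Real.sqrt_mul (Nat.cast_nonneg _), Real.sqrt_sq hδ, mul_comm]

theorem sqrt_cvxDiv_le_of_dist_row_le {r n d : ℕ} {δ : ℝ} (hδ : 0 ≤ δ)
    (A : Matrix (Fin r) (Fin d) ℝ) {B B' : Matrix (Fin n) (Fin d) ℝ}
    (h : ∀ i, dist (row B i) (row B' i) ≤ δ) :
    √(cvxDiv A B') ≤ √(cvxDiv A B) + δ * √r := by
  simpa only [cvxDiv, convRows, Fintype.card_fin] using
    sqrt_sum_sq_le_sqrt_sum_sq_add hδ (fun _ ↦ infDist_nonneg)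
      fun i ↦ infDist_convexHull_range_le hδ h (row A i)

theorem dist_row_add_left {n d : ℕ} (M N : Matrix (Fin n) (Fin d) ℝ) (i : Fin n) :
    dist (row (M + N) i) (row M i) = ‖row N i‖ :=
  dist_self_add_left (row N i) (row M i)

theorem cvxDiv_optimal_bound_general {n r d : ℕ} (δ : ℝ) (hδ : 0 ≤ δ)
    (X₀ X Z : Matrix (Fin n) (Fin d) ℝ) (H₀ Hhat : Matrix (Fin r) (Fin d) ℝ)
    (hX : X = X₀ + Z) (hZ : ∀ i, ‖row Z i‖ ≤ δ)
    (hmin : ∀ H : Matrix (Fin r) (Fin d) ℝ,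
      (∀ i, Metric.infDist (row X i) (convRows H) ≤ δ) → cvxDiv Hhat X ≤ cvxDiv H X)
    (hfeasH₀ : ∀ i, Metric.infDist (row X i) (convRows H₀) ≤ δ) :
    Real.sqrt (cvxDiv Hhat X₀) ≤ Real.sqrt (cvxDiv H₀ X₀) + 3 * δ * Real.sqrt r := by
  have hXX₀ : ∀ i, dist (row X i) (row X₀ i) ≤ δ := fun i ↦ by
    rw [hX, dist_row_add_left]
    exact hZ i
  have hX₀X : ∀ i, dist (row X₀ i) (row X i) ≤ δ := fun i ↦ (dist_comm _ _).trans_le (hXX₀ i)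
  calc √(cvxDiv Hhat X₀)
      ≤ √(cvxDiv Hhat X) + δ * √r := sqrt_cvxDiv_le_of_dist_row_le hδ Hhat hXX₀
    _ ≤ √(cvxDiv H₀ X) + δ * √r := by gcongr; exact hmin H₀ hfeasH₀
    _ ≤ √(cvxDiv H₀ X₀) + δ * √r + δ * √r := by
        gcongr; exact sqrt_cvxDiv_le_of_dist_row_le hδ H₀ hX₀X
    _ ≤ √(cvxDiv H₀ X₀) + 3 * δ * √r := by linarith [mul_nonneg hδ (Real.sqrt_nonneg (r : ℝ))]

/-- If `Ĥ` minimizes `𝒟(H,X)` over all feasible `H` (those with `dist(Xᵢ, conv(H)) ≤ δ` for all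
`i`), `H₀` is feasible, and `X = X₀ + Z` with row norms of `Z` at most `δ`, then
`𝒟(Ĥ,X₀)^{1/2} ≤ 𝒟(H₀,X₀)^{1/2} + 3δ√r`. -/
theorem cvxDiv_optimal_bound {n r d : ℕ} (δ : ℝ) (hδ : 0 ≤ δ)
    (X₀ X Z : Matrix (Fin n) (Fin d) ℝ) (H₀ Hhat : Matrix (Fin r) (Fin d) ℝ)
    (hX : X = X₀ + Z) (hZ : ∀ i, ‖row Z i‖ ≤ δ)
    (hfeasHhat : ∀ i, Metric.infDist (row X i) (convRows Hhat) ≤ δ)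
    (hmin : ∀ H : Matrix (Fin r) (Fin d) ℝ,
      (∀ i, Metric.infDist (row X i) (convRows H) ≤ δ) → cvxDiv Hhat X ≤ cvxDiv H X)
    (hfeasH₀ : ∀ i, Metric.infDist (row X i) (convRows H₀) ≤ δ) :
    Real.sqrt (cvxDiv Hhat X₀) ≤ Real.sqrt (cvxDiv H₀ X₀) + 3 * δ * Real.sqrt r :=
  cvxDiv_optimal_bound_general δ hδ X₀ X Z H₀ Hhat hX hZ hmin hfeasH₀
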